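/- Let d, n, p ≥ 1 and let Z, Z^{(i)} ⊆ ℝ^d with Z ∪ Z^{(i)} having nonempty interior. Assume: (a) for every coordinate r, the projection Z^{(i)}_r is bounded, with infimum α_inf^r and supremum α_sup^r, and there exists ζ > 0 such that the boundary strips B_r = (α_inf^r, α_inf^r + ζ) ∪ (α_sup^r − ζ, α_sup^r) satisfy B_r ⊆ Z^{(i)}_r and ∏_{r=1}^d B_r ⊆ Z^{(i)}; and (b) for two fixed distinct indices i, j, the support independence Z^{(i)}_{i,j} = Z^{(i)}_i × Z^{(i)}_j holds. Let g(z) = G φ_p(z) with G ∈ ℝ^{n×M_{d,p}} of full column rank, h(z̃) = H φ_p(z̃) with H ∈ ℝ^{n×M_{d,p}}, and let f : ℝ^n → ℝ^d satisfy h(f(x)) = x for all x ∈ g(Z ∪ Z^{(i)}), with f(g(Z ∪ Z^{(i)})) having nonempty interior. Suppose the encoder output support Ẑ^{(i)} = f(g(Z^{(i)})) satisfies Ẑ^{(i)}_{i,j} = Ẑ^{(i)}_i × Ẑ^{(i)}_j. Then f(g(z)) = A z + c on Z ∪ Z^{(i)} for some invertible A ∈ ℝ^{d×d} and c ∈ ℝ^d,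 where the i-th and j-th rows a_i, a_j of A are each nonzero and there is no column in which both a_i and a_j have a nonzero entry. -/

import Mathlib

/-
Composing `H` with a left inverse of `G` gives a matrix `M` with `M φ_p(f(g z)) = φ_p(z)`.
Its rows at the multi-indices `e_k` and `p e_k` are polynomials `q_k`, `q'_k` of degree at most
`p` with `q_k (f (g z)) = z_k` and `q'_k (f (g z)) = z_k ^ p`. Hence `q_k ^ p = q'_k` on the open
set inside `f(g(Z ∪ Zi))`, so as polynomials, and comparing degrees shows that `q_k` is affine:
`f ∘ g` has an affine left inverse, which is invertible since it is injective on an open set.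

On the box `∏ [αinf r, αsup r]` the functional `u ⬝ᵥ ·` is maximised at a corner, and the
boundary strips put points arbitrarily close to every corner into `Zi`. Since `Ẑ = A Zi + c`,
support independence of `Ẑ` lets `A i ⬝ᵥ z` and `A j ⬝ᵥ z` approach their suprema at one common
point `z ∈ Zi`, and also for `-A i`, `-A j`. If both rows were nonzero in a column `k`, choosing
signs with `u_k > 0 > v_k` would force `z_k` close to both `αsup k` and `αinf k`.
-/

/-- The finite set of multi-indices `m : Fin d → ℕ` (encoded with values in `Fin (p+1)`)
with total degree `∑ k, m k ≤ p`. -/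
abbrev MultiIdx (d p : ℕ) : Type := {m : Fin d → Fin (p + 1) // ∑ k, (m k : ℕ) ≤ p}

/-- The monomial feature map `φ_p(z)_m = ∏ k, z k ^ (m k)`. -/
noncomputable def phi (d p : ℕ) (z : Fin d → ℝ) : MultiIdx d p → ℝ :=
  fun m => ∏ k, z k ^ (m.1 k : ℕ)

/-- Projection of a set `W ⊆ ℝ^d` onto coordinate `r`. -/
def proj {d : ℕ} (r : Fin d) (W : Set (Fin d → ℝ)) : Set ℝ :=
  (fun z => z r) '' W

/-- Projection of a set `W ⊆ ℝ^d` onto the coordinate pair `(r, s)`. -/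
def proj2 {d : ℕ} (r s : Fin d) (W : Set (Fin d → ℝ)) : Set (ℝ × ℝ) :=
  (fun z => (z r, z s)) '' W

namespace MvPolynomial

variable {σ R : Type*}

theorem totalDegree_pow_of_isDomain [CommRing R] [IsDomain R] (q : MvPolynomial σ R) (n : ℕ) :
    (q ^ n).totalDegree = n * q.totalDegree := by
  rcases eq_or_ne q 0 with rfl | hq
  · rcases n with _ | n <;> simp
  induction n with
  | zero => simp
  | succ n ih =>
    rw [pow_succ, totalDegree_mul_of_isDomain (pow_ne_zero n hq) hq, ih]
    ring

theorem totalDegree_le_one_of_pow_eq [CommRing R] [IsDomain R] {q q' : MvPolynomial σ R}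
    {n : ℕ} (hn : 1 ≤ n) (h : q ^ n = q') (hq' : q'.totalDegree ≤ n) : q.totalDegree ≤ 1 := by
  rw [← h, totalDegree_pow_of_isDomain] at hq'
  exact Nat.le_of_mul_le_mul_left (by simpa using hq') hn

theorem eval_eq_of_totalDegree_le_one [CommSemiring R] [Fintype σ] [DecidableEq σ]
    {q : MvPolynomial σ R} (h : q.totalDegree ≤ 1) (x : σ → R) :
    eval x q = coeff 0 q + ∑ i, coeff (Finsupp.single i 1) q * x i := by
  have hsupp : q.support ⊆ insert 0 (Finset.univ.image (Finsupp.single · 1)) := by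
    intro s hs
    have hdeg : s.degree ≤ 1 := (le_totalDegree hs).trans h
    rcases Nat.le_one_iff_eq_zero_or_eq_one.mp hdeg with h0 | h1
    · simp [(Finsupp.degree_eq_zero_iff s).mp h0]
    · obtain ⟨i, rfl⟩ := (Finsupp.range_single_one (σ := σ)).symm.subset h1
      simp
  rw [eval_eq', Finset.sum_subset hsupp fun s _ hs => by simp [notMem_support_iff.mp hs],
    Finset.sum_insert (by simp), Finset.sum_image (by simp [Finsupp.single_left_injective])]
  congr 1
  · simp
  · refine Finset.sum_congr rfl fun i _ => ?_
    rw [Fintype.prod_eq_single i fun j hj => by simp [Ne.symm hj]]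
    simp

theorem funext_of_isOpen [Fintype σ] {p q : MvPolynomial σ ℝ} {U : Set (σ → ℝ)}
    (hU : IsOpen U) (hne : U.Nonempty) (h : ∀ x ∈ U, eval x p = eval x q) : p = q := by
  obtain ⟨x₀, hx₀⟩ := hne
  obtain ⟨ρ, hρ, hball⟩ := Metric.isOpen_iff.mp hU x₀ hx₀
  refine funext_set (fun i => Metric.ball (x₀ i) ρ) (fun i => ?_) fun x hx => h x (hball ?_)
  · rw [Real.ball_eq_Ioo]; exact Set.Ioo_infinite (by linarith)
  · rwa [ball_pi x₀ hρ]

end MvPolynomial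

theorem LinearMap.injective_of_injOn_isOpen {E F : Type*} [AddCommGroup E] [Module ℝ E]
    [TopologicalSpace E] [ContinuousAdd E] [ContinuousSMul ℝ E] [AddCommGroup F] [Module ℝ F]
    (f : E →ₗ[ℝ] F) {U : Set E} (hU : IsOpen U) (hne : U.Nonempty) (hf : Set.InjOn f U) :
    Function.Injective f := by
  obtain ⟨x₀, hx₀⟩ := hne
  refine (injective_iff_map_eq_zero f).mpr fun u hu => ?_
  have hline : Filter.Tendsto (fun s : ℝ => x₀ + s • u) (nhds 0) (nhds x₀) := by
    simpa using tendsto_const_nhds.add ((Filter.tendsto_id (x := nhds (0 : ℝ))).smul_const u)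
  obtain ⟨s, hsU, hs⟩ := ((hline.eventually (hU.mem_nhds hx₀)).filter_mono
    nhdsWithin_le_nhds |>.and self_mem_nhdsWithin).exists (f := nhdsWithin (0 : ℝ) {0}ᶜ)
  have : x₀ + s • u = x₀ := hf hsU hx₀ (by simp [hu])
  exact (smul_eq_zero.mp (by simpa using this)).resolve_left hs

theorem Matrix.row_ne_zero_of_isUnit {n R : Type*} [Fintype n] [DecidableEq n] [CommRing R]
    [Nontrivial R] {A : Matrix n n R} (hA : IsUnit A) (i : n) : A i ≠ 0 := fun h =>
  ((isUnit_iff_isUnit_det A).mp hA).ne_zero (det_eq_zero_of_row_eq_zero i (congrFun h))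

open MvPolynomial Matrix

namespace MultiIdx

variable {d p : ℕ}

def single (k : Fin d) (e : ℕ) (he : e ≤ p) : MultiIdx d p :=
  ⟨Pi.single k ⟨e, Nat.lt_succ_of_le he⟩, by
    rw [Fintype.sum_eq_single k fun r hr => by simp [hr]]; simpa using he⟩

theorem phi_single (z : Fin d → ℝ) (k : Fin d) (e : ℕ) (he : e ≤ p) :
    phi d p z (single k e he) = z k ^ e := by
  rw [phi, Fintype.prod_eq_single k fun r hr => by simp [single, hr]]
  simp [single]

noncomputable def toFinsupp (m : MultiIdx d p) : Fin d →₀ ℕ :=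
  Finsupp.equivFunOnFinite.symm fun k => (m.1 k : ℕ)

theorem degree_toFinsupp_le (m : MultiIdx d p) : m.toFinsupp.degree ≤ p := by
  simpa [toFinsupp, Finsupp.degree_eq_sum] using m.2

end MultiIdx

noncomputable def phiPoly {d p : ℕ} (γ : MultiIdx d p → ℝ) : MvPolynomial (Fin d) ℝ :=
  ∑ m, monomial m.toFinsupp (γ m)

theorem eval_phiPoly {d p : ℕ} (γ : MultiIdx d p → ℝ) (z : Fin d → ℝ) :
    eval z (phiPoly γ) = γ ⬝ᵥ phi d p z := by
  simp [phiPoly, eval_monomial, Finsupp.prod_fintype, MultiIdx.toFinsupp, dotProduct, phi]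

theorem totalDegree_phiPoly_le {d p : ℕ} (γ : MultiIdx d p → ℝ) :
    (phiPoly γ).totalDegree ≤ p :=
  (totalDegree_finsetSum _ _).trans <| Finset.sup_le fun m _ =>
    (totalDegree_monomial_le _ _).trans m.degree_toFinsupp_le

section PolynomialLeftInverse

variable {d p : ℕ} {S : Set (Fin d → ℝ)} {a : (Fin d → ℝ) → (Fin d → ℝ)}
  {M : Matrix (MultiIdx d p) (MultiIdx d p) ℝ}

theorem exists_affine_left_inverse (hp : 1 ≤ p) (hM : ∀ z ∈ S, M *ᵥ phi d p (a z) = phi d p z)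
    (hint : (interior (a '' S)).Nonempty) :
    ∃ (B : Matrix (Fin d) (Fin d) ℝ) (b : Fin d → ℝ), ∀ z ∈ S, B *ᵥ a z + b = z := by
  set q : Fin d → MvPolynomial (Fin d) ℝ := fun k => phiPoly (M (MultiIdx.single k 1 hp))
  have hq : ∀ z ∈ S, ∀ k, eval (a z) (q k) = z k := fun z hz k => by
    simpa [q, eval_phiPoly, MultiIdx.phi_single, Matrix.mulVec] using
      congrFun (hM z hz) (MultiIdx.single k 1 hp)
  have hdeg : ∀ k, (q k).totalDegree ≤ 1 := fun k => by
    refine totalDegree_le_one_of_pow_eq hp (funext_of_isOpen isOpen_interior hint ?_)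
      (totalDegree_phiPoly_le (M (MultiIdx.single k p le_rfl)))
    rintro _ hy
    obtain ⟨z, hz, rfl⟩ := interior_subset hy
    simpa [hq z hz, eval_phiPoly, MultiIdx.phi_single, Matrix.mulVec] using
      (congrFun (hM z hz) (MultiIdx.single k p le_rfl)).symm
  refine ⟨fun k r => coeff (Finsupp.single r 1) (q k), fun k => coeff 0 (q k),
    fun z hz => funext fun k => ?_⟩
  rw [← hq z hz k, eval_eq_of_totalDegree_le_one (hdeg k), add_comm]
  rfl

theorem exists_affine_of_phi_left_inverse (hp : 1 ≤ p)
    (hM : ∀ z ∈ S, M *ᵥ phi d p (a z) = phi d p z) (hint : (interior (a '' S)).Nonempty) :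
    ∃ (A : Matrix (Fin d) (Fin d) ℝ) (c : Fin d → ℝ), IsUnit A ∧ ∀ z ∈ S, a z = A *ᵥ z + c := by
  obtain ⟨B, b, hB⟩ := exists_affine_left_inverse hp hM hint
  have hinj : Function.Injective B.mulVec := by
    refine B.mulVecLin.injective_of_injOn_isOpen isOpen_interior hint
      (Set.InjOn.mono interior_subset ?_)
    rintro _ ⟨z₁, hz₁, rfl⟩ _ ⟨z₂, hz₂, rfl⟩ h
    exact congrArg a (by rw [← hB z₁ hz₁, ← hB z₂ hz₂]; exact congrArg (· + b) h)
  have hBunit : IsUnit B := Matrix.mulVec_injective_iff_isUnit.mp hinj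
  refine ⟨B⁻¹, -(B⁻¹ *ᵥ b), (Matrix.isUnit_nonsing_inv_iff).mpr hBunit, fun z hz => ?_⟩
  have hBB : B⁻¹ * B = 1 := nonsing_inv_mul B ((isUnit_iff_isUnit_det B).mp hBunit)
  calc a z = B⁻¹ *ᵥ (B *ᵥ a z + b) - B⁻¹ *ᵥ b := by
        rw [mulVec_add, mulVec_mulVec, hBB, one_mulVec, add_sub_cancel_right]
    _ = B⁻¹ *ᵥ z + -(B⁻¹ *ᵥ b) := by rw [hB z hz, sub_eq_add_neg]

end PolynomialLeftInverse

section BoxSupport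

open Set

variable {d : ℕ} (lo hi : Fin d → ℝ)

-- `⨆ z ∈ Icc lo hi, u ⬝ᵥ z` when `lo ≤ hi`.
noncomputable def boxSupport (u : Fin d → ℝ) : ℝ :=
  ∑ r, if 0 ≤ u r then u r * hi r else u r * lo r

noncomputable def boxCorner (u : Fin d → ℝ) (δ : ℝ) : Fin d → ℝ :=
  fun r => if 0 ≤ u r then hi r - δ else lo r + δ

variable {lo hi}

theorem boxCorner_mem_pi {ζ δ : ℝ} (hδ : 0 < δ) (hδζ : δ < ζ) (u : Fin d → ℝ) :
    boxCorner lo hi u δ ∈ univ.pi fun r => Ioo (lo r) (lo r + ζ) ∪ Ioo (hi r - ζ) (hi r) :=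
  fun r _ => by
    unfold boxCorner
    split_ifs
    · exact Or.inr ⟨by linarith, by linarith⟩
    · exact Or.inl ⟨by linarith, by linarith⟩

theorem dotProduct_boxCorner (u : Fin d → ℝ) (δ : ℝ) :
    u ⬝ᵥ boxCorner lo hi u δ = boxSupport lo hi u - δ * ∑ r, |u r| := by
  rw [boxSupport, Finset.mul_sum, ← Finset.sum_sub_distrib]
  refine Finset.sum_congr rfl fun r _ => ?_
  unfold boxCorner
  split_ifs with h
  · rw [abs_of_nonneg h]; ring
  · rw [abs_of_neg (not_le.mp h)]; ring

theorem le_boxSupport_sub_dotProduct {z : Fin d → ℝ} (hz : z ∈ Icc lo hi) (u : Fin d → ℝ)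
    (k : Fin d) :
    (if 0 ≤ u k then u k * hi k else u k * lo k) - u k * z k ≤
      boxSupport lo hi u - u ⬝ᵥ z := by
  rw [boxSupport, dotProduct, ← Finset.sum_sub_distrib]
  refine Finset.single_le_sum (f := fun r => (if 0 ≤ u r then u r * hi r else u r * lo r) -
    u r * z r) (fun r _ => ?_) (Finset.mem_univ k)
  split_ifs with h
  · nlinarith [hz.2 r]
  · nlinarith [hz.1 r]

end BoxSupport

-- The image of `W` under `z ↦ (u ⬝ᵥ z, v ⬝ᵥ z)` is the product of its two projections.
def SupportIndependent {d : ℕ} (W : Set (Fin d → ℝ)) (u v : Fin d → ℝ) : Prop :=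
  ∀ z₁ ∈ W, ∀ z₂ ∈ W, ∃ z ∈ W, u ⬝ᵥ z = u ⬝ᵥ z₁ ∧ v ⬝ᵥ z = v ⬝ᵥ z₂

namespace SupportIndependent

open Set

variable {d : ℕ} {W : Set (Fin d → ℝ)} {u v lo hi : Fin d → ℝ} {ζ : ℝ}

theorem neg_left (h : SupportIndependent W u v) : SupportIndependent W (-u) v := by
  intro z₁ hz₁ z₂ hz₂
  obtain ⟨z, hz, hu, hv⟩ := h z₁ hz₁ z₂ hz₂
  exact ⟨z, hz, by simp only [neg_dotProduct, hu], hv⟩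

theorem neg_right (h : SupportIndependent W u v) : SupportIndependent W u (-v) := by
  intro z₁ hz₁ z₂ hz₂
  obtain ⟨z, hz, hu, hv⟩ := h z₁ hz₁ z₂ hz₂
  exact ⟨z, hz, hu, by simp only [neg_dotProduct, hv]⟩

theorem false_of_pos_of_neg (h : SupportIndependent W u v) (hW : W ⊆ Icc lo hi)
    (hstrips : (univ.pi fun r => Ioo (lo r) (lo r + ζ) ∪ Ioo (hi r - ζ) (hi r)) ⊆ W)
    (hζ : 0 < ζ) {k : Fin d} (hu : 0 < u k) (hv : v k < 0) : False := by
  have hcorner : ∀ w : Fin d → ℝ, ∀ δ ∈ Ioo 0 ζ, boxCorner lo hi w δ ∈ W :=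
    fun w δ hδ => hstrips (boxCorner_mem_pi hδ.1 hδ.2 w)
  have hgap : ζ / 2 ≤ hi k - lo k := by
    have := (hW (hcorner u (ζ / 2) ⟨by linarith, by linarith⟩)).1 k
    simp only [boxCorner, if_pos hu.le] at this
    linarith
  have hbound : ∀ δ ∈ Ioo 0 ζ,
      u k * -v k * (hi k - lo k) ≤ δ * (-v k * ∑ r, |u r| + u k * ∑ r, |v r|) := by
    intro δ hδ
    obtain ⟨z, hz, hzu, hzv⟩ := h _ (hcorner u δ hδ) _ (hcorner v δ hδ)
    have hu' := le_boxSupport_sub_dotProduct (hW hz) u k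
    have hv' := le_boxSupport_sub_dotProduct (hW hz) v k
    rw [if_pos hu.le, hzu, dotProduct_boxCorner] at hu'
    rw [if_neg (not_le.mpr hv), hzv, dotProduct_boxCorner] at hv'
    nlinarith
  have hlim : Filter.Tendsto (fun δ : ℝ => δ * (-v k * ∑ r, |u r| + u k * ∑ r, |v r|))
      (nhdsWithin 0 (Ioi 0)) (nhds 0) := by
    simpa using ((Filter.tendsto_id (x := nhds (0 : ℝ))).mul_const _).mono_left nhdsWithin_le_nhds
  have := ge_of_tendsto hlim (Filter.mem_of_superset (Ioo_mem_nhdsGT hζ) hbound)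
  nlinarith [mul_pos hu (neg_pos.mpr hv)]

theorem eq_zero_or_eq_zero (h : SupportIndependent W u v) (hW : W ⊆ Icc lo hi)
    (hstrips : (univ.pi fun r => Ioo (lo r) (lo r + ζ) ∪ Ioo (hi r - ζ) (hi r)) ⊆ W)
    (hζ : 0 < ζ) (k : Fin d) : u k = 0 ∨ v k = 0 := by
  by_contra! ⟨hu, hv⟩
  rcases hu.lt_or_gt with hu | hu <;> rcases hv.lt_or_gt with hv | hv
  · exact h.neg_left.false_of_pos_of_neg hW hstrips hζ (neg_pos.mpr hu) hv
  · exact h.neg_left.neg_right.false_of_pos_of_neg hW hstrips hζ (neg_pos.mpr hu)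
      (neg_neg_iff_pos.mpr hv)
  · exact h.false_of_pos_of_neg hW hstrips hζ hu hv
  · exact h.neg_right.false_of_pos_of_neg hW hstrips hζ hu (neg_neg_iff_pos.mpr hv)

end SupportIndependent

theorem supportIndependent_of_proj2_eq_prod {d : ℕ} {W : Set (Fin d → ℝ)}
    {F : (Fin d → ℝ) → (Fin d → ℝ)} {A : Matrix (Fin d) (Fin d) ℝ} {c : Fin d → ℝ}
    (hF : ∀ z ∈ W, F z = A *ᵥ z + c) {i j : Fin d}
    (h : proj2 i j (F '' W) = proj i (F '' W) ×ˢ proj j (F '' W)) :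
    SupportIndependent W (A i) (A j) := by
  intro z₁ hz₁ z₂ hz₂
  have hmem : (F z₁ i, F z₂ j) ∈ proj2 i j (F '' W) :=
    h ▸ ⟨⟨F z₁, ⟨z₁, hz₁, rfl⟩, rfl⟩, ⟨F z₂, ⟨z₂, hz₂, rfl⟩, rfl⟩⟩
  obtain ⟨_, ⟨z, hz, rfl⟩, hzeq⟩ := hmem
  simp only [Prod.mk.injEq, hF z hz, hF z₁ hz₁, hF z₂ hz₂, Pi.add_apply, add_left_inj] at hzeq
  exact ⟨z, hz, hzeq⟩

theorem pairwise_block_affine_identification_general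
    (d n p : ℕ) (hp : 1 ≤ p)
    (Z Zi : Set (Fin d → ℝ))
    (αinf αsup : Fin d → ℝ)
    (hglb : ∀ r, IsGLB (proj r Zi) (αinf r))
    (hlub : ∀ r, IsLUB (proj r Zi) (αsup r))
    (ζ : ℝ) (hζ : 0 < ζ)
    (B : Fin d → Set ℝ)
    (hB : ∀ r, B r =
      Set.Ioo (αinf r) (αinf r + ζ) ∪ Set.Ioo (αsup r - ζ) (αsup r))
    (hBprod : Set.univ.pi B ⊆ Zi)
    (i j : Fin d)
    (G H : Matrix (Fin n) (MultiIdx d p) ℝ)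
    (hG : Function.Injective G.mulVec)
    (f : (Fin n → ℝ) → (Fin d → ℝ))
    (hrec : ∀ x ∈ (fun z => G.mulVec (phi d p z)) '' (Z ∪ Zi),
      H.mulVec (phi d p (f x)) = x)
    (himg : (interior (f '' ((fun z => G.mulVec (phi d p z)) '' (Z ∪ Zi)))).Nonempty)
    (hsupphat : proj2 i j (f '' ((fun z => G.mulVec (phi d p z)) '' Zi)) =
      (proj i (f '' ((fun z => G.mulVec (phi d p z)) '' Zi))) ×ˢ
      (proj j (f '' ((fun z => G.mulVec (phi d p z)) '' Zi)))) :
    ∃ (A : Matrix (Fin d) (Fin d) ℝ) (c : Fin d → ℝ), IsUnit A ∧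
      (∀ z ∈ Z ∪ Zi, f (G.mulVec (phi d p z)) = A.mulVec z + c) ∧
      A i ≠ 0 ∧ A j ≠ 0 ∧ ∀ col : Fin d, A i col = 0 ∨ A j col = 0 := by
  obtain ⟨L, hL⟩ := G.mulVecLin.exists_leftInverse_of_injective (LinearMap.ker_eq_bot.mpr hG)
  set M := LinearMap.toMatrix' (L ∘ₗ H.mulVecLin)
  have hM : ∀ z ∈ Z ∪ Zi, M *ᵥ phi d p (f (G *ᵥ phi d p z)) = phi d p z := fun z hz => by
    rw [LinearMap.toMatrix'_mulVec, LinearMap.comp_apply, mulVecLin_apply, hrec _ ⟨z, hz, rfl⟩]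
    exact LinearMap.congr_fun hL (phi d p z)
  obtain ⟨A, c, hA, hAff⟩ :=
    exists_affine_of_phi_left_inverse hp hM (by rwa [Set.image_image] at himg)
  have hind : SupportIndependent Zi (A i) (A j) :=
    supportIndependent_of_proj2_eq_prod (fun z hz => hAff z (Or.inr hz))
      (by rwa [Set.image_image] at hsupphat)
  have hbox : Zi ⊆ Set.Icc αinf αsup := fun z hz =>
    ⟨fun r => (hglb r).1 ⟨z, hz, rfl⟩, fun r => (hlub r).1 ⟨z, hz, rfl⟩⟩
  have hstrips := funext hB ▸ hBprod
  exact ⟨A, c, hA, hAff, row_ne_zero_of_isUnit hA i, row_ne_zero_of_isUnit hA j,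
    hind.eq_zero_or_eq_zero hbox hstrips hζ⟩

/-- **pairwise block-affine identification under imperfect interventions.**
The interventional support `Zi` has bounded coordinate projections with `ζ`-thick boundary
strips `B r` contained coordinatewise in the projections and whose product is contained in
`Zi`, and satisfies support independence for the pair `(i, j)`.  If the full-column-rank
polynomial decoder `g`, learned polynomial decoder `h`, and encoder `f` satisfy the
reconstruction identity on `g(Z ∪ Zi)`, `Z ∪ Zi` and `f(g(Z ∪ Zi))` have nonempty
interior, and the encoder output support `Ẑ = f(g(Zi))` also satisfies support
independence for `(i, j)`, then `f ∘ g` is affine with invertible matrix `A` whose `i`-th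
and `j`-th rows are nonzero and share no commonly nonzero column. -/
theorem pairwise_block_affine_identification
    (d n p : ℕ) (hd : 1 ≤ d) (hn : 1 ≤ n) (hp : 1 ≤ p)
    (Z Zi : Set (Fin d → ℝ)) (hZ : (interior (Z ∪ Zi)).Nonempty)
    (αinf αsup : Fin d → ℝ)
    (hglb : ∀ r, IsGLB (proj r Zi) (αinf r))
    (hlub : ∀ r, IsLUB (proj r Zi) (αsup r))
    (ζ : ℝ) (hζ : 0 < ζ)
    (B : Fin d → Set ℝ)
    (hB : ∀ r, B r =
      Set.Ioo (αinf r) (αinf r + ζ) ∪ Set.Ioo (αsup r - ζ) (αsup r))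
    (hBsub : ∀ r, B r ⊆ proj r Zi)
    (hBprod : Set.univ.pi B ⊆ Zi)
    (i j : Fin d) (hij : i ≠ j)
    (hsupp : proj2 i j Zi = (proj i Zi) ×ˢ (proj j Zi))
    (G H : Matrix (Fin n) (MultiIdx d p) ℝ)
    (hG : Function.Injective G.mulVec)
    (f : (Fin n → ℝ) → (Fin d → ℝ))
    (hrec : ∀ x ∈ (fun z => G.mulVec (phi d p z)) '' (Z ∪ Zi),
      H.mulVec (phi d p (f x)) = x)
    (himg : (interior (f '' ((fun z => G.mulVec (phi d p z)) '' (Z ∪ Zi)))).Nonempty)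
    (hsupphat : proj2 i j (f '' ((fun z => G.mulVec (phi d p z)) '' Zi)) =
      (proj i (f '' ((fun z => G.mulVec (phi d p z)) '' Zi))) ×ˢ
      (proj j (f '' ((fun z => G.mulVec (phi d p z)) '' Zi)))) :
    ∃ (A : Matrix (Fin d) (Fin d) ℝ) (c : Fin d → ℝ), IsUnit A ∧
      (∀ z ∈ Z ∪ Zi, f (G.mulVec (phi d p z)) = A.mulVec z + c) ∧
      A i ≠ 0 ∧ A j ≠ 0 ∧ ∀ col : Fin d, A i col = 0 ∨ A j col = 0 :=
  pairwise_block_affine_identification_general d n p hp Z Zi αinf αsup hglb hlub ζ hζ B hB hBprod i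
    j G H hG f hrec himg hsupphat
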